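/- Let R be a commutative ring satisfying: for every r ∈ R, every R-module map seemingly divisible by r is divisible by r. Then for every multiplicative set T ⊆ R, the localization T⁻¹R satisfies the same property. -/

import Mathlib

/-!
Write `r = r₀ / t` in `T⁻¹R`. Since `t` is a unit there, a map is (seemingly) divisible by `r`
iff it is by `r₀`; and over `T⁻¹R`, (seeming) divisibility by the image of `r₀` is the same
as (seeming) divisibility by `r₀` of the underlying `R`-linear map, because every `R`-linear
map between `T⁻¹R`-modules is automatically `T⁻¹R`-linear.
-/

universe u v

namespace LinearMap

variable {A M N : Type*} [CommRing A] [AddCommGroup M] [Module A M] [AddCommGroup N] [Module A N]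

def IsSeeminglyDivisibleBy (r : A) (f : M →ₗ[A] N) : Prop :=
  (∀ m : M, r • m = 0 → f m = 0) ∧ ∀ m : M, ∃ n : N, f m = r • n

def IsDivisibleBy (r : A) (f : M →ₗ[A] N) : Prop :=
  ∃ g : M →ₗ[A] N, f = r • g

theorem IsSeeminglyDivisibleBy.unit_mul {r : A} {f : M →ₗ[A] N}
    (hf : f.IsSeeminglyDivisibleBy r) (u : Aˣ) : f.IsSeeminglyDivisibleBy (u * r) := by
  refine ⟨fun m hm => hf.1 m ?_, fun m => ?_⟩
  · rwa [mul_smul, ← Units.smul_def, smul_eq_zero_iff_eq] at hm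
  · obtain ⟨n, hn⟩ := hf.2 m
    refine ⟨(↑u⁻¹ : A) • n, ?_⟩
    rw [hn, smul_smul, mul_right_comm, Units.mul_inv, one_mul]

theorem IsDivisibleBy.of_mul_left {s r : A} {f : M →ₗ[A] N} (hf : f.IsDivisibleBy (s * r)) :
    f.IsDivisibleBy r := by
  obtain ⟨g, rfl⟩ := hf
  exact ⟨s • g, by rw [mul_comm, mul_smul]⟩

section RestrictScalars

variable {R : Type*} [CommRing R] [Algebra R A] [Module R M] [IsScalarTower R A M]
  [Module R N] [IsScalarTower R A N]

theorem isSeeminglyDivisibleBy_restrictScalars_iff {r : R} {f : M →ₗ[A] N} :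
    (f.restrictScalars R).IsSeeminglyDivisibleBy r ↔
      f.IsSeeminglyDivisibleBy (algebraMap R A r) := by
  simp only [IsSeeminglyDivisibleBy, restrictScalars_apply, algebraMap_smul]

theorem IsDivisibleBy.of_restrictScalars (T : Submonoid R) [IsLocalization T A] {r : R}
    {f : M →ₗ[A] N} (hf : (f.restrictScalars R).IsDivisibleBy r) :
    f.IsDivisibleBy (algebraMap R A r) := by
  obtain ⟨g, hg⟩ := hf
  refine ⟨g.extendScalarsOfIsLocalization T A, ext fun m => ?_⟩
  simpa using LinearMap.congr_fun hg m

end RestrictScalars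

end LinearMap

open LinearMap

def SeeminglyDivisibleImpliesDivisible (A : Type*) [CommRing A] : Prop :=
  ∀ (r : A) (M N : Type v) [AddCommGroup M] [Module A M] [AddCommGroup N] [Module A N]
    (f : M →ₗ[A] N), f.IsSeeminglyDivisibleBy r → f.IsDivisibleBy r

theorem SeeminglyDivisibleImpliesDivisible.isLocalization {R S : Type*} [CommRing R]
    [CommRing S] [Algebra R S] (T : Submonoid R) [IsLocalization T S]
    (hR : SeeminglyDivisibleImpliesDivisible.{v} R) : SeeminglyDivisibleImpliesDivisible.{v} S := by
  intro r M N _ _ _ _ f hf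
  obtain ⟨⟨r₀, t⟩, hrt⟩ := IsLocalization.surj T r
  let u := (IsLocalization.map_units S t).unit
  have hr₀ : algebraMap R S r₀ = u * r := hrt.symm.trans (mul_comm _ _)
  let _ : Module R M := Module.restrictScalars R S M
  let _ : Module R N := Module.restrictScalars R S N
  have : IsScalarTower R S M := IsScalarTower.of_compHom R S M
  have : IsScalarTower R S N := IsScalarTower.of_compHom R S N
  have hf₀ : (f.restrictScalars R).IsSeeminglyDivisibleBy r₀ := by
    rw [isSeeminglyDivisibleBy_restrictScalars_iff, hr₀]
    exact hf.unit_mul u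
  have hg := IsDivisibleBy.of_restrictScalars T (hR r₀ M N _ hf₀)
  rw [hr₀] at hg
  exact hg.of_mul_left

/-- If every `R`-module map seemingly divisible by an element is divisible by it,
then the same holds for every localization `T⁻¹R` of `R` at a multiplicative set `T`. -/
theorem stmt5 {R : Type u} [CommRing R]
    (hR : ∀ (r : R) (M N : Type u) [AddCommGroup M] [Module R M] [AddCommGroup N]
        [Module R N] (f : M →ₗ[R] N),
        (∀ m : M, r • m = 0 → f m = 0) → (∀ m : M, ∃ n : N, f m = r • n) →
        ∃ g : M →ₗ[R] N, f = r • g)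
    (T : Submonoid R) :
    ∀ (r : Localization T) (M N : Type u) [AddCommGroup M] [Module (Localization T) M]
        [AddCommGroup N] [Module (Localization T) N] (f : M →ₗ[Localization T] N),
        (∀ m : M, r • m = 0 → f m = 0) → (∀ m : M, ∃ n : N, f m = r • n) →
        ∃ g : M →ₗ[Localization T] N, f = r • g := by
  intro r M N _ _ _ _ f h₁ h₂
  have hR' : SeeminglyDivisibleImpliesDivisible.{u} R := fun r M N _ _ _ _ f hf =>
    hR r M N f hf.1 hf.2
  exact hR'.isLocalization T r M N f ⟨h₁, h₂⟩
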